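/- Let U be an optimal interpreter. There is a constant c such that for every partial recursive function given by a code e : Nat.Partrec.Code, if eval e (n) < C_U(n) holds for every n in the domain of eval e, then for every such n, eval e (n) ≤ J(log₂(encodeCode e + 1)) + c, where J(u) = u + 2·log₂(u + 1). In particular, every partial recursive lower bound of C_U is bounded. -/

import Mathlib

open scoped ENat
open Nat.Partrec (Code)
open Nat.Partrec.Code

/-- one step of the parser state machine -/
def stepP (p : Bool × (Bool × ℕ × ℕ)) : Bool × ℕ × ℕ :=
  cond p.2.1 (true, p.2.2.1, Nat.bit p.1 p.2.2.2)
    (cond p.1 (false, p.2.2.1 + 1, p.2.2.2) (true, p.2.2.1, p.2.2.2))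

def parseP (l : List Bool) : Bool × ℕ × ℕ := l.foldr (fun b s => stepP (b, s)) (false, 0, 0)

lemma hstepP : Primrec stepP := by
  have p1 : Primrec fun p : Bool × (Bool × ℕ × ℕ) => p.1 := Primrec.fst
  have p21 : Primrec fun p : Bool × (Bool × ℕ × ℕ) => p.2.1 := Primrec.fst.comp Primrec.snd
  have p221 : Primrec fun p : Bool × (Bool × ℕ × ℕ) => p.2.2.1 :=
    Primrec.fst.comp (Primrec.snd.comp Primrec.snd)
  have p222 : Primrec fun p : Bool × (Bool × ℕ × ℕ) => p.2.2.2 :=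
    Primrec.snd.comp (Primrec.snd.comp Primrec.snd)
  have hbit : Primrec fun p : Bool × (Bool × ℕ × ℕ) => Nat.bit p.1 p.2.2.2 := by
    have : Primrec fun p : Bool × (Bool × ℕ × ℕ) =>
        cond p.1 (2 * p.2.2.2 + 1) (2 * p.2.2.2) :=
      Primrec.cond p1 (Primrec.succ.comp (Primrec.nat_mul.comp (Primrec.const 2) p222))
        (Primrec.nat_mul.comp (Primrec.const 2) p222)
    exact this.of_eq fun p => by cases p.1 <;> simp [Nat.bit]
  exact Primrec.cond p21 ((Primrec.const true).pair (p221.pair hbit))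
    (Primrec.cond p1 ((Primrec.const false).pair ((Primrec.succ.comp p221).pair p222))
      ((Primrec.const true).pair (p221.pair p222)))

lemma hparseP : Primrec parseP :=
  Primrec.list_foldr Primrec.id (Primrec.const (false, 0, 0))
    ((hstepP.comp Primrec.snd).to₂)

/-- the search function -/
def fA (x : List Bool × ℕ) (m : ℕ) : Option ℕ :=
  (Nat.Partrec.Code.evaln m.unpair.1
      (Denumerable.ofNat Nat.Partrec.Code (parseP x.1).2.2) m.unpair.2).bind
    fun k => if x.1.length + (parseP x.1).2.1 ≤ k then some m.unpair.2 else none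

lemma hfA : Computable₂ fA := by
  have hparse : Primrec fun x : List Bool × ℕ => parseP x.1 := hparseP.comp Primrec.fst
  have hu1 : Primrec fun q : (List Bool × ℕ) × ℕ => q.2.unpair.1 :=
    Primrec.fst.comp (Primrec.unpair.comp Primrec.snd)
  have hu2 : Primrec fun q : (List Bool × ℕ) × ℕ => q.2.unpair.2 :=
    Primrec.snd.comp (Primrec.unpair.comp Primrec.snd)
  have hcode : Primrec fun q : (List Bool × ℕ) × ℕ =>
      Denumerable.ofNat Nat.Partrec.Code (parseP q.1.1).2.2 :=
    (Primrec.ofNat Code).comp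
      (Primrec.snd.comp (Primrec.snd.comp (hparse.comp Primrec.fst)))
  have heval : Primrec fun q : (List Bool × ℕ) × ℕ =>
      Nat.Partrec.Code.evaln q.2.unpair.1
        (Denumerable.ofNat Nat.Partrec.Code (parseP q.1.1).2.2) q.2.unpair.2 :=
    Nat.Partrec.Code.primrec_evaln.comp ((hu1.pair hcode).pair hu2)
  have ht : Primrec fun q : (List Bool × ℕ) × ℕ =>
      q.1.1.length + (parseP q.1.1).2.1 :=
    Primrec.nat_add.comp (Primrec.list_length.comp (Primrec.fst.comp Primrec.fst))
      (Primrec.fst.comp (Primrec.snd.comp (hparse.comp Primrec.fst)))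
  have : Primrec fun q : (List Bool × ℕ) × ℕ => fA q.1 q.2 := by
    refine Primrec.option_bind heval ?_
    refine Primrec.ite ?_ (Primrec.option_some.comp (hu2.comp Primrec.fst))
      (Primrec.const none)
    exact Primrec.nat_le.comp (ht.comp Primrec.fst) Primrec.snd
  exact Primrec₂.to_comp this.to₂

/-- the interpreter -/
def AI : List Bool × ℕ →. ℕ := fun x => Nat.rfindOpt (fA x)

lemma hAI : Partrec AI := Partrec.rfindOpt hfA

lemma foldr_bit_bits (n : ℕ) : n.bits.foldr Nat.bit 0 = n := by
  induction n using Nat.binaryRec' with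
  | zero => simp
  | bit b n h ih => rw [Nat.bits_append_bit _ _ h]; simp [ih]

lemma foldr_phase (l : List Bool) (d acc : ℕ) :
    l.foldr (fun b s => stepP (b, s)) (true, d, acc) = (true, d, l.foldr Nat.bit acc) := by
  induction l with
  | nil => rfl
  | cons b l ih => rw [List.foldr_cons, ih]; rfl

lemma foldr_replicate (d : ℕ) :
    (List.replicate d true).foldr (fun b s => stepP (b, s)) ((false, 0, 0) : Bool × ℕ × ℕ)
      = (false, d, 0) := by
  induction d with
  | zero => rfl
  | succ d ih => rw [List.replicate_succ, List.foldr_cons, ih]; rfl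

lemma parseP_spec (N d : ℕ) :
    parseP (N.bits ++ false :: List.replicate d true) = (true, d, N) := by
  unfold parseP
  rw [List.foldr_append, List.foldr_cons, foldr_replicate]
  have h : stepP (false, (false, d, 0)) = (true, d, 0) := rfl
  rw [h, foldr_phase, foldr_bit_bits]

/-- Conditional Kolmogorov complexity of `x` given `y` with respect to the
interpreter `A`. -/
noncomputable def CC (A : List Bool × ℕ →. ℕ) (x y : ℕ) : ℕ∞ :=
  sInf {n : ℕ∞ | ∃ p : List Bool, x ∈ A (p, y) ∧ (p.length : ℕ∞) = n}

/-- `U` is an optimal interpreter. -/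
def IsOptimal (U : List Bool × ℕ →. ℕ) : Prop :=
  Partrec U ∧ ∀ A : List Bool × ℕ →. ℕ, Partrec A →
    ∃ c : ℕ, ∀ x y : ℕ, CC U x y ≤ CC A x y + (c : ℕ∞)

/-- `J(u) = u + 2·log₂(u+1)`. -/
def J (u : ℕ) : ℕ := u + 2 * Nat.log 2 (u + 1)


lemma CC_le {A : List Bool × ℕ →. ℕ} {x y : ℕ} {p : List Bool} (h : x ∈ A (p, y)) :
    CC A x y ≤ (p.length : ℕ∞) :=
  sInf_le ⟨p, h, rfl⟩

/-- The complexity function has no nontrivial partial recursive lower bound: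
there is a constant `c` such that for every code `e`, if the values of
`eval e` are always smaller than `C_U`, then they are bounded by
`J(log₂(encodeCode e + 1)) + c`. -/
theorem no_nontrivial_partrec_lower_bound
    (U : List Bool × ℕ →. ℕ) (hU : IsOptimal U) :
    ∃ c : ℕ, ∀ e : Nat.Partrec.Code,
      (∀ n k : ℕ, k ∈ e.eval n → (k : ℕ∞) < CC U n 0) →
      ∀ n k : ℕ, k ∈ e.eval n →
        k ≤ J (Nat.log 2 (Nat.Partrec.Code.encodeCode e + 1)) + c := by
  obtain ⟨-, hopt⟩ := hU
  obtain ⟨c, hc⟩ := hopt AI hAI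
  refine ⟨2 * c + 4, fun e he n k hk => ?_⟩
  by_contra hcon
  push_neg at hcon
  set N := Nat.Partrec.Code.encodeCode e with hN
  set L := Nat.log 2 (N + 1) with hL
  set p : List Bool := N.bits ++ false :: List.replicate (c + 1) true with hp
  have hparse : parseP p = (true, c + 1, N) := parseP_spec N (c + 1)
  have hcodeN : Denumerable.ofNat Code N = e := by
    rw [hN, ← Nat.Partrec.Code.encodeCode_eq]
    exact Denumerable.ofNat_encode e
  -- length bound
  have hsize : N.bits.length ≤ L + 1 := by
    rw [Nat.size_eq_bits_len, hL]
    exact Nat.size_le.2 (lt_of_le_of_lt (Nat.le_succ N)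
      (Nat.lt_pow_succ_log_self (by norm_num) (N + 1)))
  have hplen : p.length ≤ L + c + 3 := by
    simp only [hp, List.length_append, List.length_cons, List.length_replicate]
    omega
  -- the threshold
  set t := p.length + (c + 1) with ht
  have htk : t ≤ k := by
    have : J L ≥ L := Nat.le_add_right _ _
    omega
  -- domain of the search
  obtain ⟨s, hs⟩ := Nat.Partrec.Code.evaln_complete.1 hk
  have hdom : ∃ m a, a ∈ fA (p, 0) m := by
    refine ⟨Nat.pair s n, n, ?_⟩
    simp only [fA, Nat.unpair_pair, hparse, hcodeN]
    rw [Option.mem_def] at hs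
    rw [hs]
    rw [Option.bind_some]
    rw [if_pos htk]
    rfl
  obtain ⟨y, hy⟩ := Part.dom_iff_mem.1 ((Nat.rfindOpt_dom).2 hdom)
  -- what the search returns
  obtain ⟨m, hm⟩ := Nat.rfindOpt_spec hy
  rw [Option.mem_def, fA, hparse, hcodeN] at hm
  obtain ⟨k', hk', hif⟩ := Option.bind_eq_some_iff.1 hm
  by_cases hle : p.length + (c + 1) ≤ k'
  · rw [if_pos hle, Option.some_inj] at hif
    subst hif
    have hk'e : k' ∈ e.eval m.unpair.2 := Nat.Partrec.Code.evaln_sound hk'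
    have h1 : (k' : ℕ∞) < CC U m.unpair.2 0 := he _ _ hk'e
    have h2 : CC U m.unpair.2 0 ≤ ((p.length + c : ℕ) : ℕ∞) := by
      calc CC U m.unpair.2 0 ≤ CC AI m.unpair.2 0 + (c : ℕ∞) := hc _ _
        _ ≤ (p.length : ℕ∞) + (c : ℕ∞) := add_le_add_left (CC_le hy) _
        _ = ((p.length + c : ℕ) : ℕ∞) := by rw [Nat.cast_add]
    have := Nat.cast_lt.1 (lt_of_lt_of_le h1 h2)
    omega
  · rw [if_neg hle] at hif
    cases hif
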